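/- arXiv:1812.04383 — 12 statements merged into one kernel-verified Lean document; each statement's English description precedes it below -/
import Mathlib

section
/- Let r: ℝ² → ℝ be differentiable at (ρ,p) with r(ρ,p) > 0, let ρ + p > 0, and let χ ≠ 0 be a real number satisfying the local thermal equilibrium relation r(ρ,p) = (ρ+p)(∂_ρ r + χ ∂_p r) at (ρ,p). Define τ(ρ,p) = (ρ+p)/r(ρ,p)². Then ∂_p τ + (1/χ) ∂_ρ τ = (χ − 1)/(r² χ) at (ρ,p). -/
/-!
By the quotient rule, `χ (τ'_p)_s = (χ + 1) / r² - 2 (ρ + p) (∂_ρ r + χ ∂_p r) / r³`, and the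
l.t.e. relation turns `(ρ + p) (∂_ρ r + χ ∂_p r)` into `r`, leaving `(χ + 1 - 2) / r²`.
-/

theorem HasFDerivAt.div_sq {𝕜 E : Type*} [NontriviallyNormedField 𝕜] [NormedAddCommGroup E]
    [NormedSpace 𝕜 E] {s r : E → 𝕜} {s' r' : E →L[𝕜] 𝕜} {x : E}
    (hs : HasFDerivAt s s' x) (hr : HasFDerivAt r r' x) (hx : r x ≠ 0) :
    HasFDerivAt (fun q => s q / r q ^ 2) ((r x ^ 2)⁻¹ • s' - (2 * s x / r x ^ 3) • r') x := by
  have hinv := (hasDerivAt_inv (pow_ne_zero 2 hx)).comp_hasFDerivAt x (hr.pow 2)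
  simp only [div_eq_mul_inv]
  refine (hs.mul hinv).congr_fderiv ?_
  ext v
  simp only [Nat.add_one_sub_one, pow_one, nsmul_eq_mul, Nat.cast_ofNat, Function.comp_apply,
    add_apply, smul_apply, sub_apply, smul_eq_mul, neg_mul, mul_neg]
  field_simp
  ring

theorem stmt_4_general (r : ℝ × ℝ → ℝ) (ρ p χ : ℝ) (Dr : ℝ × ℝ →L[ℝ] ℝ)
    (hr : HasFDerivAt r Dr (ρ, p)) (hrpos : 0 < r (ρ, p)) (hχ : χ ≠ 0)
    (hlte : r (ρ, p) = (ρ + p) * (Dr (1, 0) + χ * Dr (0, 1))) :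
    fderiv ℝ (fun q : ℝ × ℝ => (q.1 + q.2) / (r q) ^ 2) (ρ, p) (0, 1) +
        (1 / χ) * fderiv ℝ (fun q : ℝ × ℝ => (q.1 + q.2) / (r q) ^ 2) (ρ, p) (1, 0) =
      (χ - 1) / ((r (ρ, p)) ^ 2 * χ) := by
  have hsum : HasFDerivAt (fun q : ℝ × ℝ => q.1 + q.2)
      (ContinuousLinearMap.fst ℝ ℝ ℝ + ContinuousLinearMap.snd ℝ ℝ ℝ) (ρ, p) :=
    hasFDerivAt_fst.add hasFDerivAt_snd
  rw [(hsum.div_sq hr hrpos.ne').fderiv]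
  simp only [sub_apply, smul_apply, add_apply, ContinuousLinearMap.coe_fst',
    ContinuousLinearMap.coe_snd', smul_eq_mul]
  field_simp
  linear_combination 2 * hlte

theorem stmt_4 (r : ℝ × ℝ → ℝ) (ρ p χ : ℝ) (Dr : ℝ × ℝ →L[ℝ] ℝ)
    (hr : HasFDerivAt r Dr (ρ, p)) (hrpos : 0 < r (ρ, p)) (hsum : 0 < ρ + p) (hχ : χ ≠ 0)
    (hlte : r (ρ, p) = (ρ + p) * (Dr (1, 0) + χ * Dr (0, 1))) :
    fderiv ℝ (fun q : ℝ × ℝ => (q.1 + q.2) / (r q) ^ 2) (ρ, p) (0, 1) +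
        (1 / χ) * fderiv ℝ (fun q : ℝ × ℝ => (q.1 + q.2) / (r q) ^ 2) (ρ, p) (1, 0) =
      (χ - 1) / ((r (ρ, p)) ^ 2 * χ) :=
  stmt_4_general r ρ p χ Dr hr hrpos hχ hlte
end

section
/- Let r, χ: ℝ² → ℝ be differentiable at (ρ,p) with r(ρ,p) > 0, χ(ρ,p) ≠ 0, ρ + p > 0, and suppose the local thermal equilibrium relation r = (ρ+p)(∂_ρ r + χ ∂_p r) holds at (ρ,p). Define ξ(ρ,p) = (χ(ρ,p) − 1)/(r(ρ,p)² χ(ρ,p)). Then ∂_p ξ + (1/χ) ∂_ρ ξ = [(ρ+p)(χ ∂_p χ + ∂_ρ χ) + 2χ(1 − χ)] / (r² (ρ+p) χ³) at (ρ,p). -/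
/-!
Differentiating `ξ = (χ - 1) / (r² χ)` gives `dξ = dχ / (r² χ²) + 2 (1 - χ) / (r³ χ) · dr`.
Along the isentropic direction `∂_p + χ⁻¹ ∂_ρ` the l.t.e. relation says exactly that
`(r'_p)_s = r / ((ρ + p) χ)`, so the `dr` term becomes `2 (1 - χ) / (r² (ρ + p) χ²)` and only
the derivative of `χ` is left.
-/

open ContinuousLinearMap

/-- `(z'_p)_s = ∂_p z + χ⁻¹ ∂_ρ z`, computed from the derivative `Dz` of `z` in `(ρ, p)`. -/
noncomputable def isentropicDeriv (χ : ℝ) (Dz : ℝ × ℝ →L[ℝ] ℝ) : ℝ :=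
  Dz (0, 1) + (1 / χ) * Dz (1, 0)

lemma isentropicDeriv_add (χ : ℝ) (D D' : ℝ × ℝ →L[ℝ] ℝ) :
    isentropicDeriv χ (D + D') = isentropicDeriv χ D + isentropicDeriv χ D' := by
  simp only [isentropicDeriv, add_apply]
  ring

lemma isentropicDeriv_smul (χ c : ℝ) (D : ℝ × ℝ →L[ℝ] ℝ) :
    isentropicDeriv χ (c • D) = c * isentropicDeriv χ D := by
  simp only [isentropicDeriv, smul_apply, smul_eq_mul]
  ring

lemma isentropicDeriv_eq_of_lte {ρ p r χ : ℝ} {Dr : ℝ × ℝ →L[ℝ] ℝ} (hχ : χ ≠ 0)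
    (hsum : ρ + p ≠ 0) (hlte : r = (ρ + p) * (Dr (1, 0) + χ * Dr (0, 1))) :
    isentropicDeriv χ Dr = r / ((ρ + p) * χ) := by
  rw [isentropicDeriv, hlte]
  field_simp
  ring

section

variable {E : Type*} [NormedAddCommGroup E] [NormedSpace ℝ E]

lemma HasFDerivAt.sub_one_div_sq_mul {r χ : E → ℝ} {Dr Dχ : E →L[ℝ] ℝ} {x : E}
    (hr : HasFDerivAt r Dr x) (hχ : HasFDerivAt χ Dχ x) (hr0 : r x ≠ 0) (hχ0 : χ x ≠ 0) :
    HasFDerivAt (fun q => (χ q - 1) / (r q ^ 2 * χ q))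
      ((1 / (r x ^ 2 * χ x ^ 2)) • Dχ + (2 * (1 - χ x) / (r x ^ 3 * χ x)) • Dr) x := by
  have hden : HasFDerivAt (fun q => r q ^ 2 * χ q)
      (r x ^ 2 • Dχ + χ x • ((2 * r x) • Dr)) x := by
    simpa using (hr.pow 2).fun_mul hχ
  have hden0 : r x ^ 2 * χ x ≠ 0 := by positivity
  have hinv : HasFDerivAt (fun q => (r q ^ 2 * χ q)⁻¹)
      (-((r x ^ 2 * χ x) ^ 2)⁻¹ • (r x ^ 2 • Dχ + χ x • ((2 * r x) • Dr))) x :=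
    (hasDerivAt_inv hden0).comp_hasFDerivAt x hden
  simp only [div_eq_mul_inv]
  refine ((hχ.sub_const 1).fun_mul hinv).congr_fderiv ?_
  ext v
  simp only [add_apply, smul_apply, smul_eq_mul]
  field_simp
  ring

end

theorem stmt_5 (r χ : ℝ × ℝ → ℝ) (ρ p : ℝ) (Dr Dχ : ℝ × ℝ →L[ℝ] ℝ)
    (hr : HasFDerivAt r Dr (ρ, p)) (hχd : HasFDerivAt χ Dχ (ρ, p))
    (hrpos : 0 < r (ρ, p)) (hχ0 : χ (ρ, p) ≠ 0) (hsum : 0 < ρ + p)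
    (hlte : r (ρ, p) = (ρ + p) * (Dr (1, 0) + χ (ρ, p) * Dr (0, 1))) :
    fderiv ℝ (fun q : ℝ × ℝ => (χ q - 1) / ((r q) ^ 2 * χ q)) (ρ, p) (0, 1) +
        (1 / χ (ρ, p)) *
          fderiv ℝ (fun q : ℝ × ℝ => (χ q - 1) / ((r q) ^ 2 * χ q)) (ρ, p) (1, 0) =
      ((ρ + p) * (χ (ρ, p) * Dχ (0, 1) + Dχ (1, 0)) + 2 * χ (ρ, p) * (1 - χ (ρ, p))) /
        ((r (ρ, p)) ^ 2 * (ρ + p) * (χ (ρ, p)) ^ 3) := by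
  have hξ := hr.sub_one_div_sq_mul hχd hrpos.ne' hχ0
  change isentropicDeriv (χ (ρ, p)) (fderiv ℝ _ (ρ, p)) = _
  rw [hξ.fderiv, isentropicDeriv_add, isentropicDeriv_smul, isentropicDeriv_smul,
    isentropicDeriv_eq_of_lte hχ0 hsum.ne' hlte, isentropicDeriv]
  field_simp [hrpos.ne', hsum.ne']
end

section
/- Let r̄, s̄: ℝ² → ℝ be differentiable at (ρ,p) with ∂_ρ s̄ ≠ 0, and let R, σ: ℝ → ℝ be differentiable at s̄(ρ,p) with σ'(s̄(ρ,p)) ≠ 0. Define r(ρ,p) = r̄(ρ,p)·R(s̄(ρ,p)) and s(ρ,p) = σ(s̄(ρ,p)). Then, with Ī = (1/∂_ρ s̄)[r̄ − 2(ρ+p) ∂_ρ r̄] and I = (1/∂_ρ s)[r − 2(ρ+p) ∂_ρ r], one has I = (1/σ'(s̄)) [ R(s̄) Ī − 2 r̄ (ρ+p) R'(s̄) ]. -/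
theorem stmt_9 (rb sb : ℝ × ℝ → ℝ) (R σ : ℝ → ℝ) (ρ p R' σ' : ℝ)
    (Drb Dsb : ℝ × ℝ →L[ℝ] ℝ)
    (hrb : HasFDerivAt rb Drb (ρ, p)) (hsb : HasFDerivAt sb Dsb (ρ, p))
    (hsρ : Dsb (1, 0) ≠ 0)
    (hR : HasDerivAt R R' (sb (ρ, p))) (hσ : HasDerivAt σ σ' (sb (ρ, p))) (hσ' : σ' ≠ 0) :
    (1 / fderiv ℝ (fun q : ℝ × ℝ => σ (sb q)) (ρ, p) (1, 0)) *
        (rb (ρ, p) * R (sb (ρ, p)) -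
          2 * (ρ + p) * fderiv ℝ (fun q : ℝ × ℝ => rb q * R (sb q)) (ρ, p) (1, 0)) =
      (1 / σ') *
        (R (sb (ρ, p)) * ((1 / Dsb (1, 0)) * (rb (ρ, p) - 2 * (ρ + p) * Drb (1, 0))) -
          2 * rb (ρ, p) * (ρ + p) * R') := by
  have h1 : HasFDerivAt (fun q : ℝ × ℝ => σ (sb q))
      (σ' • Dsb) (ρ, p) := hσ.comp_hasFDerivAt _ hsb
  have h2 : HasFDerivAt (fun q : ℝ × ℝ => rb q * R (sb q))
      ((rb (ρ, p)) • (R' • Dsb) + (R (sb (ρ, p))) • Drb) (ρ, p) :=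
    hrb.mul (hR.comp_hasFDerivAt _ hsb)
  rw [h1.fderiv, h2.fderiv]
  simp only [ContinuousLinearMap.add_apply, ContinuousLinearMap.smul_apply, smul_eq_mul]
  field_simp
  ring
end

section
/- Let f: ℝ → ℝ be differentiable at p with f(p) > 0, let ρ + p > 0, and define r(ρ,p) = f(p)·√(ρ+p) and F(p) = 2 f'(p)/f(p). Then: (a) r − 2(ρ+p) ∂_ρ r = 0; (b) if 1 + (ρ+p)F(p) ≠ 0 then ∂_p r ≠ 0 and χ := (1/∂_p r)(r/(ρ+p) − ∂_ρ r) = 1/(1 + (ρ+p)F(p)); (c) if moreover F is differentiable at p, 1 + (ρ+p)F(p) > 0, and we set χ(ρ,p) = 1/(1 + (ρ+p)F(p)), then the H₁ conditions 0 < χ < 1 and (ρ+p)(χ ∂_p χ + ∂_ρ χ) + 2χ(1 − χ) > 0 hold at (ρ,p) if and only if F(p) > 0 and F'(p) < F(p)². -/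
/-!
Write `s = ρ + p`. The density `r = f(p) √s` has `∂_ρ r = f(p) / (2√s) = r / (2s)`, which is (a),
and `∂_p r = ∂_ρ r · (1 + s F(p))`, so `χ = (r/s - ∂_ρ r) / ∂_p r = 1 / (1 + s F(p))`, which is
(b). For (c), with `D = 1 + s F(p)` the compressibility expression simplifies to
`s² (F(p)² - F'(p)) / D³`, while `χ < 1` amounts to `s F(p) > 0`.
-/

open ContinuousLinearMap

section Derivatives

variable {f F : ℝ → ℝ} {f' F' ρ p : ℝ}

theorem hasFDerivAt_fst_add_snd {x : ℝ × ℝ} :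
    HasFDerivAt (fun q : ℝ × ℝ => q.1 + q.2) (fst ℝ ℝ ℝ + snd ℝ ℝ ℝ) x :=
  hasFDerivAt_fst.add hasFDerivAt_snd

theorem hasFDerivAt_mul_sqrt_add (hf : HasDerivAt f f' p) (hs : ρ + p ≠ 0) :
    HasFDerivAt (fun q : ℝ × ℝ => f q.2 * √(q.1 + q.2))
      ((f p / (2 * √(ρ + p))) • fst ℝ ℝ ℝ
        + (f p / (2 * √(ρ + p)) + √(ρ + p) * f') • snd ℝ ℝ ℝ) (ρ, p) := by
  refine ((hf.comp_hasFDerivAt (ρ, p) hasFDerivAt_snd).mul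
    ((Real.hasDerivAt_sqrt hs).comp_hasFDerivAt (ρ, p) hasFDerivAt_fst_add_snd)).congr_fderiv ?_
  ext <;> simp <;> ring

theorem fderiv_mul_sqrt_add_apply_fst (hf : HasDerivAt f f' p) (hs : ρ + p ≠ 0) :
    fderiv ℝ (fun q : ℝ × ℝ => f q.2 * √(q.1 + q.2)) (ρ, p) (1, 0)
      = f p / (2 * √(ρ + p)) := by
  rw [(hasFDerivAt_mul_sqrt_add hf hs).fderiv]
  simp

theorem fderiv_mul_sqrt_add_apply_snd (hf : HasDerivAt f f' p) (hs : ρ + p ≠ 0) :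
    fderiv ℝ (fun q : ℝ × ℝ => f q.2 * √(q.1 + q.2)) (ρ, p) (0, 1)
      = f p / (2 * √(ρ + p)) + √(ρ + p) * f' := by
  rw [(hasFDerivAt_mul_sqrt_add hf hs).fderiv]
  simp

theorem hasFDerivAt_one_div_one_add_mul (hF : HasDerivAt F F' p) (hD : 1 + (ρ + p) * F p ≠ 0) :
    HasFDerivAt (fun q : ℝ × ℝ => 1 / (1 + (q.1 + q.2) * F q.2))
      ((-F p / (1 + (ρ + p) * F p) ^ 2) • fst ℝ ℝ ℝ
        + (-(F p + (ρ + p) * F') / (1 + (ρ + p) * F p) ^ 2) • snd ℝ ℝ ℝ) (ρ, p) := by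
  have hden := (hasFDerivAt_fst_add_snd.mul
    (hF.comp_hasFDerivAt (ρ, p) hasFDerivAt_snd)).const_add 1
  have hinv : HasDerivAt (fun y : ℝ => 1 / y)
      (-1 / (1 + (ρ + p) * F p) ^ 2) (1 + (ρ + p) * F p) := by
    simpa only [one_div, neg_div] using hasDerivAt_inv hD
  refine (hinv.comp_hasFDerivAt (ρ, p) hden).congr_fderiv ?_
  ext <;> simp <;> ring

theorem fderiv_one_div_one_add_mul_apply_fst (hF : HasDerivAt F F' p)
    (hD : 1 + (ρ + p) * F p ≠ 0) :
    fderiv ℝ (fun q : ℝ × ℝ => 1 / (1 + (q.1 + q.2) * F q.2)) (ρ, p) (1, 0)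
      = -F p / (1 + (ρ + p) * F p) ^ 2 := by
  rw [(hasFDerivAt_one_div_one_add_mul hF hD).fderiv]
  simp

theorem fderiv_one_div_one_add_mul_apply_snd (hF : HasDerivAt F F' p)
    (hD : 1 + (ρ + p) * F p ≠ 0) :
    fderiv ℝ (fun q : ℝ × ℝ => 1 / (1 + (q.1 + q.2) * F q.2)) (ρ, p) (0, 1)
      = -(F p + (ρ + p) * F') / (1 + (ρ + p) * F p) ^ 2 := by
  rw [(hasFDerivAt_one_div_one_add_mul hF hD).fderiv]
  simp

end Derivatives

section Algebra

variable {s c F F' : ℝ}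

theorem mul_sqrt_sub_two_mul_div_two_mul_sqrt (hs : 0 < s) :
    c * √s - 2 * s * (c / (2 * √s)) = 0 := by
  have : √s ≠ 0 := (Real.sqrt_pos.mpr hs).ne'
  field_simp
  rw [Real.sq_sqrt hs.le]
  ring

theorem mul_sqrt_div_sub_div_two_mul_sqrt :
    c * √s / s - c / (2 * √s) = c / (2 * √s) := by
  rw [mul_div_assoc, Real.sqrt_div_self']
  ring

theorem compressibility_expr_eq (hD : 1 + s * F ≠ 0) :
    s * (1 / (1 + s * F) * (-(F + s * F') / (1 + s * F) ^ 2) + -F / (1 + s * F) ^ 2)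
        + 2 * (1 / (1 + s * F)) * (1 - 1 / (1 + s * F))
      = s ^ 2 * (F ^ 2 - F') / (1 + s * F) ^ 3 := by
  field_simp
  ring

theorem compressibility_iff (hs : 0 < s) (hD : 0 < 1 + s * F) :
    (0 < 1 / (1 + s * F) ∧ 1 / (1 + s * F) < 1 ∧ 0 < s ^ 2 * (F ^ 2 - F') / (1 + s * F) ^ 3)
      ↔ 0 < F ∧ F' < F ^ 2 := by
  rw [div_lt_one hD, div_pos_iff_of_pos_right (pow_pos hD 3),
    mul_pos_iff_of_pos_left (pow_pos hs 2), sub_pos, lt_add_iff_pos_right,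
    mul_pos_iff_of_pos_left hs]
  exact and_iff_right (by positivity)

end Algebra

theorem stmt_10 (f : ℝ → ℝ) (ρ p : ℝ)
    (hf : DifferentiableAt ℝ f p) (hfpos : 0 < f p) (hsum : 0 < ρ + p) :
    (f p * Real.sqrt (ρ + p) -
        2 * (ρ + p) *
          fderiv ℝ (fun q : ℝ × ℝ => f q.2 * Real.sqrt (q.1 + q.2)) (ρ, p) (1, 0) = 0) ∧
      (1 + (ρ + p) * (2 * deriv f p / f p) ≠ 0 →
        fderiv ℝ (fun q : ℝ × ℝ => f q.2 * Real.sqrt (q.1 + q.2)) (ρ, p) (0, 1) ≠ 0 ∧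
          (1 / fderiv ℝ (fun q : ℝ × ℝ => f q.2 * Real.sqrt (q.1 + q.2)) (ρ, p) (0, 1)) *
              (f p * Real.sqrt (ρ + p) / (ρ + p) -
                fderiv ℝ (fun q : ℝ × ℝ => f q.2 * Real.sqrt (q.1 + q.2)) (ρ, p) (1, 0)) =
            1 / (1 + (ρ + p) * (2 * deriv f p / f p))) ∧
      (DifferentiableAt ℝ (fun x => 2 * deriv f x / f x) p →
        0 < 1 + (ρ + p) * (2 * deriv f p / f p) →
        ((0 < 1 / (1 + (ρ + p) * (2 * deriv f p / f p)) ∧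
            1 / (1 + (ρ + p) * (2 * deriv f p / f p)) < 1 ∧
            0 < (ρ + p) *
                  ((1 / (1 + (ρ + p) * (2 * deriv f p / f p))) *
                      fderiv ℝ
                        (fun q : ℝ × ℝ => 1 / (1 + (q.1 + q.2) * (2 * deriv f q.2 / f q.2)))
                        (ρ, p) (0, 1) +
                    fderiv ℝ
                      (fun q : ℝ × ℝ => 1 / (1 + (q.1 + q.2) * (2 * deriv f q.2 / f q.2)))
                      (ρ, p) (1, 0)) +
                2 * (1 / (1 + (ρ + p) * (2 * deriv f p / f p))) *
                  (1 - 1 / (1 + (ρ + p) * (2 * deriv f p / f p)))) ↔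
          (0 < 2 * deriv f p / f p ∧
            deriv (fun x => 2 * deriv f x / f x) p < (2 * deriv f p / f p) ^ 2))) := by
  have hr_fst := fderiv_mul_sqrt_add_apply_fst hf.hasDerivAt hsum.ne'
  have hr_snd : fderiv ℝ (fun q : ℝ × ℝ => f q.2 * √(q.1 + q.2)) (ρ, p) (0, 1)
      = f p / (2 * √(ρ + p)) * (1 + (ρ + p) * (2 * deriv f p / f p)) := by
    rw [fderiv_mul_sqrt_add_apply_snd hf.hasDerivAt hsum.ne']
    have : √(ρ + p) ≠ 0 := (Real.sqrt_pos.mpr hsum).ne'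
    field_simp
    rw [Real.sq_sqrt hsum.le]
  refine ⟨?_, fun hD => ?_, fun hF hD => ?_⟩
  · rw [hr_fst, mul_sqrt_sub_two_mul_div_two_mul_sqrt hsum]
  · have hc : f p / (2 * √(ρ + p)) ≠ 0 := by positivity
    rw [hr_snd, hr_fst, mul_sqrt_div_sub_div_two_mul_sqrt]
    exact ⟨mul_ne_zero hc hD, by field_simp⟩
  · rw [fderiv_one_div_one_add_mul_apply_fst hF.hasDerivAt hD.ne',
      fderiv_one_div_one_add_mul_apply_snd hF.hasDerivAt hD.ne', compressibility_expr_eq hD.ne']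
    exact compressibility_iff hsum hD
end

section
/- Let c: ℝ → ℝ, k > 0, and let f: ℝ → ℝ be differentiable with f > 0 and f'(x) = f(x)/(c(x) − x) wherever c(x) ≠ x. Define s(ρ,p) = k·ln(f(p/ρ)/ρ) for ρ > 0. Then at any point (ρ,p) with ρ > 0 and c(π) ≠ π, where π = p/ρ: ∂_p s = k/(ρ(c(π) − π)) ≠ 0, ∂_ρ s = −k c(π)/(ρ(c(π) − π)), and hence −(∂_ρ s)/(∂_p s) = c(π). -/
/-!
Write `s = k (log f(π) - log ρ)` with `π = p / ρ`. Since `∂_p π = 1 / ρ`, `∂_ρ π = -π / ρ` and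
`(log f)' = 1 / (c - π)`, the chain rule gives `∂_p s = k / (ρ (c - π))` and
`∂_ρ s = -(k / ρ) (π / (c - π) + 1) = -k c / (ρ (c - π))`, so `-∂_ρ s / ∂_p s = c`.
-/

open ContinuousLinearMap

theorem hasDerivAt_of_deriv_eq_of_ne_zero {f : ℝ → ℝ} {a x : ℝ} (h : deriv f x = a) (ha : a ≠ 0) :
    HasDerivAt f a x :=
  h ▸ (differentiableAt_of_deriv_ne_zero (h ▸ ha)).hasDerivAt

theorem hasFDerivAt_snd_div_fst {ρ π : ℝ} (hρ : ρ ≠ 0) :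
    HasFDerivAt (fun q : ℝ × ℝ => q.2 / q.1) (ρ⁻¹ • (snd ℝ ℝ ℝ - π • fst ℝ ℝ ℝ)) (ρ, ρ * π) := by
  have h := (hasFDerivAt_snd (𝕜 := ℝ) (p := (ρ, ρ * π))).fun_mul
    ((hasDerivAt_inv hρ).comp_hasFDerivAt (ρ, ρ * π) hasFDerivAt_fst)
  simp only [div_eq_mul_inv]
  refine h.congr_fderiv ?_
  ext
  · simp; field_simp
  · simp

theorem hasFDerivAt_log_comp_snd_div_fst_div_fst {f : ℝ → ℝ} {f' ρ π : ℝ}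
    (hf : HasDerivAt f f' π) (hfπ : f π ≠ 0) (hρ : ρ ≠ 0) :
    HasFDerivAt (fun q : ℝ × ℝ => Real.log (f (q.2 / q.1) / q.1))
      (ρ⁻¹ • ((f' / f π) • (snd ℝ ℝ ℝ - π • fst ℝ ℝ ℝ) - fst ℝ ℝ ℝ)) (ρ, ρ * π) := by
  have hπ : ρ * π / ρ = π := mul_div_cancel_left₀ π hρ
  have hcomp := (hπ ▸ hf).comp_hasFDerivAt (ρ, ρ * π) (hasFDerivAt_snd_div_fst hρ)
  have hquot := (hcomp.fun_mul
    ((hasDerivAt_inv hρ).comp_hasFDerivAt (ρ, ρ * π) hasFDerivAt_fst)).log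
    (by simpa [hπ] using div_ne_zero hfπ hρ)
  simp only [div_eq_mul_inv]
  refine hquot.congr_fderiv ?_
  ext
  · simp [hπ]; field_simp; ring
  · simp [hπ]; field_simp

theorem stmt_11_general (c f : ℝ → ℝ) (k ρ p : ℝ) (hk : 0 < k)
    (hfpos : ∀ x, 0 < f x)
    (hf' : ∀ x, c x ≠ x → deriv f x = f x / (c x - x))
    (hρ : 0 < ρ) (hc : c (p / ρ) ≠ p / ρ) :
    fderiv ℝ (fun q : ℝ × ℝ => k * Real.log (f (q.2 / q.1) / q.1)) (ρ, p) (0, 1) =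
        k / (ρ * (c (p / ρ) - p / ρ)) ∧
      fderiv ℝ (fun q : ℝ × ℝ => k * Real.log (f (q.2 / q.1) / q.1)) (ρ, p) (0, 1) ≠ 0 ∧
      fderiv ℝ (fun q : ℝ × ℝ => k * Real.log (f (q.2 / q.1) / q.1)) (ρ, p) (1, 0) =
        -(k * c (p / ρ)) / (ρ * (c (p / ρ) - p / ρ)) ∧
      -(fderiv ℝ (fun q : ℝ × ℝ => k * Real.log (f (q.2 / q.1) / q.1)) (ρ, p) (1, 0)) /
          fderiv ℝ (fun q : ℝ × ℝ => k * Real.log (f (q.2 / q.1) / q.1)) (ρ, p) (0, 1) =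
        c (p / ρ) := by
  obtain ⟨π, rfl⟩ : ∃ π, p = ρ * π := ⟨p / ρ, (mul_div_cancel₀ p hρ.ne').symm⟩
  rw [mul_div_cancel_left₀ π hρ.ne'] at hc ⊢
  have hsub : c π - π ≠ 0 := sub_ne_zero.mpr hc
  have hfπ : f π ≠ 0 := (hfpos π).ne'
  have hderiv : HasDerivAt f (f π / (c π - π)) π :=
    hasDerivAt_of_deriv_eq_of_ne_zero (hf' π hc) (div_ne_zero hfπ hsub)
  have hs := ((hasFDerivAt_log_comp_snd_div_fst_div_fst hderiv hfπ hρ.ne').const_mul k).fderiv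
  have hpartial_p : fderiv ℝ (fun q : ℝ × ℝ => k * Real.log (f (q.2 / q.1) / q.1)) (ρ, ρ * π) (0, 1) =
      k / (ρ * (c π - π)) := by
    rw [hs]; simp; field_simp
  have hpartial_ρ : fderiv ℝ (fun q : ℝ × ℝ => k * Real.log (f (q.2 / q.1) / q.1)) (ρ, ρ * π) (1, 0) =
      -(k * c π) / (ρ * (c π - π)) := by
    rw [hs]; simp; field_simp; ring
  have hne : k / (ρ * (c π - π)) ≠ 0 := div_ne_zero hk.ne' (mul_ne_zero hρ.ne' hsub)
  refine ⟨hpartial_p, hpartial_p ▸ hne, hpartial_ρ, ?_⟩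
  rw [hpartial_p, hpartial_ρ]
  field_simp

theorem stmt_11 (c f : ℝ → ℝ) (k ρ p : ℝ) (hk : 0 < k)
    (hf : Differentiable ℝ f) (hfpos : ∀ x, 0 < f x)
    (hf' : ∀ x, c x ≠ x → deriv f x = f x / (c x - x))
    (hρ : 0 < ρ) (hc : c (p / ρ) ≠ p / ρ) :
    fderiv ℝ (fun q : ℝ × ℝ => k * Real.log (f (q.2 / q.1) / q.1)) (ρ, p) (0, 1) =
        k / (ρ * (c (p / ρ) - p / ρ)) ∧
      fderiv ℝ (fun q : ℝ × ℝ => k * Real.log (f (q.2 / q.1) / q.1)) (ρ, p) (0, 1) ≠ 0 ∧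
      fderiv ℝ (fun q : ℝ × ℝ => k * Real.log (f (q.2 / q.1) / q.1)) (ρ, p) (1, 0) =
        -(k * c (p / ρ)) / (ρ * (c (p / ρ) - p / ρ)) ∧
      -(fderiv ℝ (fun q : ℝ × ℝ => k * Real.log (f (q.2 / q.1) / q.1)) (ρ, p) (1, 0)) /
          fderiv ℝ (fun q : ℝ × ℝ => k * Real.log (f (q.2 / q.1) / q.1)) (ρ, p) (0, 1) =
        c (p / ρ) :=
  stmt_11_general c f k ρ p hk hfpos hf' hρ hc
end

section
/- Let c: ℝ → ℝ, and let e: ℝ → ℝ be differentiable with e > 0 and e'(x) = e(x)·x/((c(x) − x)(x + 1)) wherever c(x) ≠ x and x ≠ −1. Define r(ρ,p) = ρ/e(p/ρ) for ρ > 0. Then at any point (ρ,p) with ρ > 0, π := p/ρ satisfying π ≠ 0, π ≠ −1 and c(π) ≠ π: ∂_p r ≠ 0 and (1/∂_p r)(r/(ρ+p) − ∂_ρ r) = c(π). -/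
/-! With `h = 1 / e`, the density `r(ρ, p) = ρ h(p / ρ)` is homogeneous of degree one, so
`∂_p r = h'(π)` and `∂_ρ r = h(π) - π h'(π)`, while `r / (ρ + p) = h(π) / (1 + π)`. The
generating equation says `h' = -h ψ`, and then `(r / (ρ + p) - ∂_ρ r) / ∂_p r = π / ((1 + π) ψ) + π`,
which is `(c - π) + π = c`. -/

theorem hasFDerivAt_mul_comp_div {h : ℝ → ℝ} {h' ρ p : ℝ} (hρ : ρ ≠ 0)
    (hh : HasDerivAt h h' (p / ρ)) :
    HasFDerivAt (fun q : ℝ × ℝ => q.1 * h (q.2 / q.1))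
      ((h (p / ρ) - p / ρ * h') • ContinuousLinearMap.fst ℝ ℝ ℝ +
        h' • ContinuousLinearMap.snd ℝ ℝ ℝ) (ρ, p) := by
  have hdiv : HasFDerivAt (fun q : ℝ × ℝ => q.2 / q.1) _ (ρ, p) :=
    hasFDerivAt_snd.mul
      ((hasDerivAt_inv hρ).comp_hasFDerivAt (ρ, p) (hasFDerivAt_fst (𝕜 := ℝ) (p := (ρ, p))))
  refine (hasFDerivAt_fst.mul (hh.comp_hasFDerivAt (ρ, p) hdiv)).congr_fderiv ?_
  ext
  · simp [field]
    ring
  · simp [field]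

theorem sound_speed_eq {ρ p h h' c : ℝ} (hρ : ρ ≠ 0) (hh : h ≠ 0) (hπ0 : p / ρ ≠ 0)
    (hπ1 : p / ρ ≠ -1) (hc : c ≠ p / ρ)
    (hh' : h' = -h * (p / ρ / ((c - p / ρ) * (p / ρ + 1)))) :
    h' ≠ 0 ∧ 1 / h' * (ρ * h / (ρ + p) - (h - p / ρ * h')) = c := by
  obtain ⟨π, rfl⟩ : ∃ π, p = π * ρ := ⟨p / ρ, (div_mul_cancel₀ p hρ).symm⟩
  rw [mul_div_cancel_right₀ π hρ] at *
  have hcπ : c - π ≠ 0 := sub_ne_zero.mpr hc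
  have hπ1' : π + 1 ≠ 0 := fun hπ => hπ1 (by linarith)
  have hρπ : ρ + π * ρ = (π + 1) * ρ := by ring
  subst hh'
  refine ⟨by simp [*], ?_⟩
  rw [hρπ]
  field_simp
  ring

theorem stmt_12 (c e : ℝ → ℝ)
    (he : Differentiable ℝ e) (hepos : ∀ x, 0 < e x)
    (he' : ∀ x, c x ≠ x → x ≠ -1 → deriv e x = e x * x / ((c x - x) * (x + 1)))
    (ρ p : ℝ) (hρ : 0 < ρ) (hπ0 : p / ρ ≠ 0) (hπ1 : p / ρ ≠ -1) (hc : c (p / ρ) ≠ p / ρ) :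
    fderiv ℝ (fun q : ℝ × ℝ => q.1 / e (q.2 / q.1)) (ρ, p) (0, 1) ≠ 0 ∧
      (1 / fderiv ℝ (fun q : ℝ × ℝ => q.1 / e (q.2 / q.1)) (ρ, p) (0, 1)) *
          (ρ / e (p / ρ) / (ρ + p) -
            fderiv ℝ (fun q : ℝ × ℝ => q.1 / e (q.2 / q.1)) (ρ, p) (1, 0)) =
        c (p / ρ) := by
  have he0 : e (p / ρ) ≠ 0 := (hepos _).ne'
  have hr : HasFDerivAt (fun q : ℝ × ℝ => q.1 / e (q.2 / q.1)) _ (ρ, p) :=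
    hasFDerivAt_mul_comp_div hρ.ne' ((he _).hasDerivAt.inv he0)
  rw [hr.fderiv]
  simp only [add_apply, smul_apply, ContinuousLinearMap.coe_fst', ContinuousLinearMap.coe_snd',
    smul_eq_mul, mul_zero, mul_one, add_zero, zero_add]
  rw [Pi.inv_apply, div_eq_mul_inv ρ]
  refine sound_speed_eq hρ.ne' (inv_ne_zero he0) hπ0 hπ1 hc ?_
  rw [he' _ hc hπ1]
  field_simp
end

section
/- Let c: ℝ → ℝ, k > 0, and let e, f: ℝ → ℝ be differentiable with e > 0, f > 0, e'(x) = e(x)·x/((c(x) − x)(x + 1)) and f'(x) = f(x)/(c(x) − x) wherever c(x) ≠ x and x ≠ −1. For ρ > 0 set π = p/ρ, r(ρ,p) = ρ/e(π), s(ρ,p) = k ln(f(π)/ρ), ε(ρ,p) = e(π) − 1, Θ(ρ,p) = π e(π)/k. Then at any (ρ,p) with ρ > 0, c(π) ≠ π and π ≠ −1: (i) p = k r Θ; (ii) Θ ∂_ρ s = ∂_ρ ε + p ∂_ρ(1/r) and Θ ∂_p s = ∂_p ε + p ∂_p(1/r). -/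
/-!
Write `π = p / ρ`, so that `dπ = (dp - π dρ) / ρ`. Then `ds = k (f'/f dπ - dρ/ρ)`, `dε = e' dπ`
and `d(1/r) = d(e(π)/ρ) = e'/ρ dπ - e/ρ² dρ`. Substituting, the `dρ` terms of both sides of
`Θ ds = dε + p d(1/r)` are `-π e dρ / ρ`, and the `dπ` terms agree iff `(1 + π) e' = π e f'/f`,
which is the quotient of the two generating equations. So the balance holds in every direction.
-/

open Real ContinuousLinearMap

noncomputable section

namespace IdealGas

/-- A state is `q = (ρ, p)`; this is `π = p / ρ`. -/
def ratio (q : ℝ × ℝ) : ℝ := q.2 / q.1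

def entropy (k : ℝ) (f : ℝ → ℝ) (q : ℝ × ℝ) : ℝ := k * log (f (ratio q) / q.1)

def energy (e : ℝ → ℝ) (q : ℝ × ℝ) : ℝ := e (ratio q) - 1

def specificVolume (e : ℝ → ℝ) (q : ℝ × ℝ) : ℝ := 1 / (q.1 / e (ratio q))

variable {ρ p : ℝ}

theorem hasFDerivAt_fst_inv (hρ : ρ ≠ 0) :
    HasFDerivAt (fun q : ℝ × ℝ => q.1⁻¹) (-(ρ ^ 2)⁻¹ • fst ℝ ℝ ℝ) (ρ, p) :=
  (hasDerivAt_inv hρ).comp_hasFDerivAt (ρ, p) (hasFDerivAt_fst (p := (ρ, p)))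

theorem hasFDerivAt_ratio (hρ : ρ ≠ 0) :
    HasFDerivAt ratio (ρ⁻¹ • (snd ℝ ℝ ℝ - (p / ρ) • fst ℝ ℝ ℝ)) (ρ, p) := by
  have h := hasFDerivAt_snd.mul (hasFDerivAt_fst_inv (p := p) hρ)
  refine (h.congr_fderiv ?_).congr_of_eventuallyEq (.of_forall fun q => div_eq_mul_inv _ _)
  ext <;> simp [field]

theorem HasFDerivAt.comp_ratio {g : ℝ → ℝ} (hg : DifferentiableAt ℝ g (p / ρ)) (hρ : ρ ≠ 0) :
    HasFDerivAt (fun q => g (ratio q))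
      (deriv g (p / ρ) • ρ⁻¹ • (snd ℝ ℝ ℝ - (p / ρ) • fst ℝ ℝ ℝ)) (ρ, p) :=
  hg.hasDerivAt.comp_hasFDerivAt (ρ, p) (hasFDerivAt_ratio hρ)

theorem fderiv_energy_apply {e : ℝ → ℝ} (he : DifferentiableAt ℝ e (p / ρ)) (hρ : ρ ≠ 0)
    (v : ℝ × ℝ) :
    fderiv ℝ (energy e) (ρ, p) v = deriv e (p / ρ) * ((v.2 - p / ρ * v.1) / ρ) := by
  have h : HasFDerivAt (energy e) _ (ρ, p) := (HasFDerivAt.comp_ratio he hρ).sub_const 1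
  rw [h.fderiv]
  simp only [smul_apply, sub_apply, coe_snd', coe_fst', smul_eq_mul]
  ring

theorem fderiv_specificVolume_apply {e : ℝ → ℝ} (he : DifferentiableAt ℝ e (p / ρ))
    (hρ : ρ ≠ 0) (v : ℝ × ℝ) :
    fderiv ℝ (specificVolume e) (ρ, p) v =
      deriv e (p / ρ) * ((v.2 - p / ρ * v.1) / ρ) / ρ - e (p / ρ) * v.1 / ρ ^ 2 := by
  have h := (HasFDerivAt.comp_ratio he hρ).mul (hasFDerivAt_fst_inv (p := p) hρ)
  rw [(h.congr_of_eventuallyEq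
    (.of_forall fun q => by simp [specificVolume, div_eq_mul_inv])).fderiv]
  simp only [ratio, add_apply, smul_apply, coe_fst', coe_snd', sub_apply, smul_eq_mul]
  ring

theorem fderiv_entropy_apply {f : ℝ → ℝ} (k : ℝ) (hf : DifferentiableAt ℝ f (p / ρ))
    (hf0 : f (p / ρ) ≠ 0) (hρ : ρ ≠ 0) (v : ℝ × ℝ) :
    fderiv ℝ (entropy k f) (ρ, p) v =
      k * (logDeriv f (p / ρ) * ((v.2 - p / ρ * v.1) / ρ) - v.1 / ρ) := by
  have h := (HasFDerivAt.comp_ratio hf hρ).mul (hasFDerivAt_fst_inv (p := p) hρ)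
  have h' := (h.log (by simp [ratio, hf0, hρ])).const_mul k
  rw [(h'.congr_of_eventuallyEq
    (.of_forall fun q => by simp [entropy, div_eq_mul_inv])).fderiv]
  simp only [ratio, Pi.mul_apply, smul_add, add_apply, smul_apply, coe_fst', coe_snd', sub_apply, smul_eq_mul,
    logDeriv_apply]
  field_simp
  ring

theorem ideal_gas_law {k : ℝ} {e : ℝ → ℝ} (hk : k ≠ 0) (he0 : e (p / ρ) ≠ 0) (hρ : ρ ≠ 0) :
    p = k * (ρ / e (p / ρ)) * (p / ρ * e (p / ρ) / k) := by
  field_simp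

theorem temperature_mul_fderiv_entropy_eq {k : ℝ} {e f : ℝ → ℝ} (hk : k ≠ 0)
    (he : DifferentiableAt ℝ e (p / ρ)) (hf : DifferentiableAt ℝ f (p / ρ))
    (hf0 : f (p / ρ) ≠ 0) (hρ : ρ ≠ 0)
    (hef : (p / ρ + 1) * deriv e (p / ρ) = p / ρ * e (p / ρ) * logDeriv f (p / ρ))
    (v : ℝ × ℝ) :
    p / ρ * e (p / ρ) / k * fderiv ℝ (entropy k f) (ρ, p) v =
      fderiv ℝ (energy e) (ρ, p) v + p * fderiv ℝ (specificVolume e) (ρ, p) v := by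
  rw [fderiv_entropy_apply k hf hf0 hρ, fderiv_energy_apply he hρ,
    fderiv_specificVolume_apply he hρ]
  obtain ⟨x, rfl⟩ : ∃ x, p = x * ρ := ⟨p / ρ, by field_simp⟩
  simp only [mul_div_cancel_right₀ _ hρ] at hef ⊢
  field_simp
  linear_combination -(v.2 - x * v.1) * hef

theorem add_one_mul_deriv_eq_mul_logDeriv {e f : ℝ → ℝ} {c x : ℝ} (hf0 : f x ≠ 0)
    (hc : c ≠ x) (hx : x ≠ -1) (he' : deriv e x = e x * x / ((c - x) * (x + 1)))
    (hf' : deriv f x = f x / (c - x)) :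
    (x + 1) * deriv e x = x * e x * logDeriv f x := by
  have hcx : c - x ≠ 0 := sub_ne_zero.mpr hc
  have hx1 : x + 1 ≠ 0 := fun h => hx (eq_neg_of_add_eq_zero_left h)
  rw [logDeriv_apply, he', hf']
  field_simp

end IdealGas

end

open IdealGas in
theorem stmt_13 (c e f : ℝ → ℝ) (k : ℝ) (hk : 0 < k)
    (he : Differentiable ℝ e) (hf : Differentiable ℝ f)
    (hepos : ∀ x, 0 < e x) (hfpos : ∀ x, 0 < f x)
    (he' : ∀ x, c x ≠ x → x ≠ -1 → deriv e x = e x * x / ((c x - x) * (x + 1)))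
    (hf' : ∀ x, c x ≠ x → x ≠ -1 → deriv f x = f x / (c x - x))
    (ρ p : ℝ) (hρ : 0 < ρ) (hc : c (p / ρ) ≠ p / ρ) (hπ : p / ρ ≠ -1) :
    p = k * (ρ / e (p / ρ)) * ((p / ρ) * e (p / ρ) / k) ∧
      ((p / ρ) * e (p / ρ) / k) *
          fderiv ℝ (fun q : ℝ × ℝ => k * Real.log (f (q.2 / q.1) / q.1)) (ρ, p) (1, 0) =
        fderiv ℝ (fun q : ℝ × ℝ => e (q.2 / q.1) - 1) (ρ, p) (1, 0) +
          p * fderiv ℝ (fun q : ℝ × ℝ => 1 / (q.1 / e (q.2 / q.1))) (ρ, p) (1, 0) ∧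
      ((p / ρ) * e (p / ρ) / k) *
          fderiv ℝ (fun q : ℝ × ℝ => k * Real.log (f (q.2 / q.1) / q.1)) (ρ, p) (0, 1) =
        fderiv ℝ (fun q : ℝ × ℝ => e (q.2 / q.1) - 1) (ρ, p) (0, 1) +
          p * fderiv ℝ (fun q : ℝ × ℝ => 1 / (q.1 / e (q.2 / q.1))) (ρ, p) (0, 1) := by
  have hf0 : f (p / ρ) ≠ 0 := (hfpos _).ne'
  have hef := add_one_mul_deriv_eq_mul_logDeriv hf0 hc hπ (he' _ hc hπ) (hf' _ hc hπ)
  have balance := temperature_mul_fderiv_entropy_eq hk.ne' (he _) (hf _) hf0 hρ.ne' hef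
  exact ⟨ideal_gas_law hk.ne' (hepos _).ne' hρ.ne', balance (1, 0), balance (0, 1)⟩
end

section
/- Let c: ℝ → ℝ be differentiable and define χ(ρ,p) = c(p/ρ) for ρ > 0. Then at any (ρ,p) with ρ > 0, setting π = p/ρ: ∂_p χ = c'(π)/ρ, ∂_ρ χ = −c'(π)π/ρ, and (ρ+p)(χ ∂_p χ + ∂_ρ χ) + 2χ(1 − χ) = (1 + π)(c(π) − π) c'(π) + 2 c(π)(1 − c(π)). Consequently, the H₁ conditions 0 < χ < 1 and (ρ+p)(χ ∂_p χ + ∂_ρ χ) + 2χ(1−χ) > 0 hold at (ρ,p) if and only if 0 < c(π) < 1 and (1+π)(c(π) − π) c'(π) + 2 c(π)(1 − c(π)) > 0. -/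
theorem stmt_14 (c : ℝ → ℝ) (hc : Differentiable ℝ c) (ρ p : ℝ) (hρ : 0 < ρ) :
    fderiv ℝ (fun q : ℝ × ℝ => c (q.2 / q.1)) (ρ, p) (0, 1) = deriv c (p / ρ) / ρ ∧
      fderiv ℝ (fun q : ℝ × ℝ => c (q.2 / q.1)) (ρ, p) (1, 0) =
        -(deriv c (p / ρ) * (p / ρ)) / ρ ∧
      (ρ + p) *
            (c (p / ρ) * fderiv ℝ (fun q : ℝ × ℝ => c (q.2 / q.1)) (ρ, p) (0, 1) +
              fderiv ℝ (fun q : ℝ × ℝ => c (q.2 / q.1)) (ρ, p) (1, 0)) +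
          2 * c (p / ρ) * (1 - c (p / ρ)) =
        (1 + p / ρ) * (c (p / ρ) - p / ρ) * deriv c (p / ρ) +
          2 * c (p / ρ) * (1 - c (p / ρ)) ∧
      ((0 < c (p / ρ) ∧ c (p / ρ) < 1 ∧
          0 < (ρ + p) *
                (c (p / ρ) * fderiv ℝ (fun q : ℝ × ℝ => c (q.2 / q.1)) (ρ, p) (0, 1) +
                  fderiv ℝ (fun q : ℝ × ℝ => c (q.2 / q.1)) (ρ, p) (1, 0)) +
              2 * c (p / ρ) * (1 - c (p / ρ))) ↔
        (0 < c (p / ρ) ∧ c (p / ρ) < 1 ∧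
          0 < (1 + p / ρ) * (c (p / ρ) - p / ρ) * deriv c (p / ρ) +
              2 * c (p / ρ) * (1 - c (p / ρ)))) := by
  have hinv : HasFDerivAt (fun q : ℝ × ℝ => (q.1)⁻¹)
      ((-(ρ ^ 2)⁻¹) • (ContinuousLinearMap.fst ℝ ℝ ℝ)) (ρ, p) :=
    (hasDerivAt_inv hρ.ne').comp_hasFDerivAt (ρ, p) hasFDerivAt_fst
  have hg : HasFDerivAt (fun q : ℝ × ℝ => q.2 / q.1)
      (p • ((-(ρ ^ 2)⁻¹) • (ContinuousLinearMap.fst ℝ ℝ ℝ))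
        + ρ⁻¹ • (ContinuousLinearMap.snd ℝ ℝ ℝ)) (ρ, p) := by
    have h := hasFDerivAt_snd.mul hinv
    simp only [div_eq_mul_inv]
    exact h
  set L := p • ((-(ρ ^ 2)⁻¹) • (ContinuousLinearMap.fst ℝ ℝ ℝ))
        + ρ⁻¹ • (ContinuousLinearMap.snd ℝ ℝ ℝ) with hL
  have hcomp : HasFDerivAt (fun q : ℝ × ℝ => c (q.2 / q.1))
      (deriv c (p / ρ) • L) (ρ, p) :=
    ((hc (p / ρ)).hasDerivAt).comp_hasFDerivAt (ρ, p) hg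
  have hf := hcomp.fderiv
  rw [hf]
  have h1 : (deriv c (p / ρ) • L) ((0 : ℝ), (1 : ℝ)) = deriv c (p / ρ) / ρ := by
    simp [hL, div_eq_mul_inv]
  have h2 : (deriv c (p / ρ) • L) ((1 : ℝ), (0 : ℝ)) = -(deriv c (p / ρ) * (p / ρ)) / ρ := by
    simp only [hL, ContinuousLinearMap.add_apply, ContinuousLinearMap.smul_apply,
      ContinuousLinearMap.coe_fst', ContinuousLinearMap.coe_snd', smul_eq_mul]
    ring
  rw [h1, h2]
  have key : (ρ + p) * (c (p / ρ) * (deriv c (p / ρ) / ρ) + -(deriv c (p / ρ) * (p / ρ)) / ρ)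
        + 2 * c (p / ρ) * (1 - c (p / ρ))
      = (1 + p / ρ) * (c (p / ρ) - p / ρ) * deriv c (p / ρ)
        + 2 * c (p / ρ) * (1 - c (p / ρ)) := by
    field_simp
    ring
  exact ⟨rfl, rfl, key, by rw [key]⟩
end

section
/- Let c: ℝ → ℝ, k > 0, and let e, f: ℝ → ℝ be differentiable with e > 0, f > 0, e'(x) = e(x)·x/((c(x) − x)(x + 1)) and f'(x) = f(x)/(c(x) − x) wherever c(x) ≠ x and x ≠ −1. For ρ > 0 set π = p/ρ, r(ρ,p) = ρ/e(π) and s(ρ,p) = k ln(f(π)/ρ). Then at any (ρ,p) with ρ > 0, c(π) ≠ π, c(π) ≠ 0, π ≠ −1: I := (1/∂_ρ s)[r − 2(ρ+p) ∂_ρ r] = ρ² [(2π + 1) c(π) − π] / (k c(π) e(π)). Consequently, if moreover c(π) > 0 and 2π + 1 > 0, then I > 0 if and only if c(π) > π/(2π + 1), and I < 0 if and only if c(π) < π/(2π + 1). -/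
/-!
Differentiating through `π = p / ρ`, where `∂_ρ π = -π / ρ`, the ideal-gas relations for `f'/f`
and `e'/e` give `∂_ρ s = -k c / (ρ (c - π))` and
`∂_ρ r = ((π + 1) c - π) / (e (c - π) (π + 1))`. Substituted into `I`, the factors `c - π` and
`π + 1` cancel and leave `ρ² ((2π + 1) c - π) / (k c e)`, whose sign for `c, 2π + 1 > 0` is that of
`c - π / (2π + 1)`.
-/

theorem fderiv_apply_one_zero {𝕜 E G : Type*} [NontriviallyNormedField 𝕜]
    [NormedAddCommGroup E] [NormedSpace 𝕜 E] [NormedAddCommGroup G] [NormedSpace 𝕜 G]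
    {F : 𝕜 × E → G} {x : 𝕜} {y : E} {a : G} (hF : DifferentiableAt 𝕜 F (x, y))
    (ha : HasDerivAt (fun t => F (t, y)) a x) : fderiv 𝕜 F (x, y) (1, 0) = a :=
  (ha.unique <| hF.hasFDerivAt.comp_hasDerivAt x <|
    (hasDerivAt_id x).prodMk (hasDerivAt_const x y)).symm

theorem HasDerivAt.comp_const_div {g : ℝ → ℝ} {g' p ρ : ℝ} (hg : HasDerivAt g g' (p / ρ))
    (hρ : ρ ≠ 0) : HasDerivAt (fun t => g (p / t)) (-(p / ρ) * g' / ρ) ρ := by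
  have hu : HasDerivAt (fun t => p / t) (-(p / ρ) / ρ) ρ :=
    ((hasDerivAt_const ρ p).div (hasDerivAt_id ρ) hρ).congr_deriv (by simp only [id]; ring)
  exact (hg.comp ρ hu).congr_deriv (by ring)

section IdealGas

variable {c p ρ : ℝ}

theorem hasDerivAt_entropy_rho {f : ℝ → ℝ} (k : ℝ)
    (hf : HasDerivAt f (f (p / ρ) / (c - p / ρ)) (p / ρ)) (hfπ : f (p / ρ) ≠ 0) (hρ : ρ ≠ 0)
    (hc : c ≠ p / ρ) :
    HasDerivAt (fun t => k * Real.log (f (p / t) / t)) (-(k * c) / (ρ * (c - p / ρ))) ρ := by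
  refine ((((hf.comp_const_div hρ).div (hasDerivAt_id ρ) hρ).log
    (div_ne_zero hfπ hρ)).const_mul k).congr_deriv ?_
  simp only [Pi.div_apply, id]
  generalize p / ρ = π at *
  have := sub_ne_zero.mpr hc
  field_simp
  ring

theorem hasDerivAt_matterDensity_rho {e : ℝ → ℝ}
    (he : HasDerivAt e (e (p / ρ) * (p / ρ) / ((c - p / ρ) * (p / ρ + 1))) (p / ρ))
    (heπ : e (p / ρ) ≠ 0) (hρ : ρ ≠ 0) (hc : c ≠ p / ρ) (hπ : p / ρ ≠ -1) :
    HasDerivAt (fun t => t / e (p / t))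
      (((p / ρ + 1) * c - p / ρ) / (e (p / ρ) * ((c - p / ρ) * (p / ρ + 1)))) ρ := by
  refine ((hasDerivAt_id ρ).div (he.comp_const_div hρ) heπ).congr_deriv ?_
  simp only [id]
  generalize p / ρ = π at *
  have := sub_ne_zero.mpr hc
  have : π + 1 ≠ 0 := fun h => hπ (eq_neg_of_add_eq_zero_left h)
  field_simp
  ring

theorem compressibility_indicator_eq {k e : ℝ} (hρ : ρ ≠ 0) (he : e ≠ 0) (hc : c ≠ p / ρ)
    (hπ : p / ρ ≠ -1) :
    1 / (-(k * c) / (ρ * (c - p / ρ))) *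
        (ρ / e - 2 * (ρ + p) * (((p / ρ + 1) * c - p / ρ) / (e * ((c - p / ρ) * (p / ρ + 1))))) =
      ρ ^ 2 * ((2 * (p / ρ) + 1) * c - p / ρ) / (k * c * e) := by
  generalize hπ' : p / ρ = π at *
  obtain rfl : p = π * ρ := by rw [← hπ', div_mul_cancel₀ _ hρ]
  have := sub_ne_zero.mpr hc
  have : π + 1 ≠ 0 := fun h => hπ (eq_neg_of_add_eq_zero_left h)
  field_simp
  ring

end IdealGas

theorem mul_sub_div_pos_iff {a b d x y : ℝ} (ha : 0 < a) (hb : 0 < b) (hd : 0 < d) :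
    0 < a * (b * x - y) / d ↔ y / b < x := by
  rw [div_pos_iff_of_pos_right hd, mul_pos_iff_of_pos_left ha, sub_pos, div_lt_iff₀' hb]

theorem mul_sub_div_neg_iff {a b d x y : ℝ} (ha : 0 < a) (hb : 0 < b) (hd : 0 < d) :
    a * (b * x - y) / d < 0 ↔ x < y / b := by
  rw [div_lt_iff₀ hd, zero_mul, ← mul_zero a, mul_lt_mul_iff_right₀ ha, sub_neg, lt_div_iff₀' hb]

theorem stmt_15_general (c e f : ℝ → ℝ) (k : ℝ) (hk : 0 < k)
    (he : Differentiable ℝ e) (hf : Differentiable ℝ f)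
    (hepos : ∀ x, 0 < e x) (hfpos : ∀ x, 0 < f x)
    (he' : ∀ x, c x ≠ x → x ≠ -1 → deriv e x = e x * x / ((c x - x) * (x + 1)))
    (hf' : ∀ x, c x ≠ x → x ≠ -1 → deriv f x = f x / (c x - x))
    (ρ p : ℝ) (hρ : 0 < ρ) (hc : c (p / ρ) ≠ p / ρ)
    (hπ : p / ρ ≠ -1) :
    (1 / fderiv ℝ (fun q : ℝ × ℝ => k * Real.log (f (q.2 / q.1) / q.1)) (ρ, p) (1, 0)) *
        (ρ / e (p / ρ) -
          2 * (ρ + p) * fderiv ℝ (fun q : ℝ × ℝ => q.1 / e (q.2 / q.1)) (ρ, p) (1, 0)) =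
      ρ ^ 2 * ((2 * (p / ρ) + 1) * c (p / ρ) - p / ρ) / (k * c (p / ρ) * e (p / ρ)) ∧
    (0 < c (p / ρ) → 0 < 2 * (p / ρ) + 1 →
      ((0 < (1 / fderiv ℝ (fun q : ℝ × ℝ => k * Real.log (f (q.2 / q.1) / q.1)) (ρ, p) (1, 0)) *
            (ρ / e (p / ρ) -
              2 * (ρ + p) * fderiv ℝ (fun q : ℝ × ℝ => q.1 / e (q.2 / q.1)) (ρ, p) (1, 0)) ↔
          p / ρ / (2 * (p / ρ) + 1) < c (p / ρ)) ∧
        ((1 / fderiv ℝ (fun q : ℝ × ℝ => k * Real.log (f (q.2 / q.1) / q.1)) (ρ, p) (1, 0)) *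
            (ρ / e (p / ρ) -
              2 * (ρ + p) * fderiv ℝ (fun q : ℝ × ℝ => q.1 / e (q.2 / q.1)) (ρ, p) (1, 0)) < 0 ↔
          c (p / ρ) < p / ρ / (2 * (p / ρ) + 1)))) := by
  have hρ0 : ρ ≠ 0 := hρ.ne'
  have heπ := (hepos (p / ρ)).ne'
  have hfπ := (hfpos (p / ρ)).ne'
  rw [fderiv_apply_one_zero (by fun_prop (disch := simp [*]))
      (hasDerivAt_entropy_rho k (hf' _ hc hπ ▸ (hf _).hasDerivAt) hfπ hρ0 hc),
    fderiv_apply_one_zero (by fun_prop (disch := simp [*]))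
      (hasDerivAt_matterDensity_rho (he' _ hc hπ ▸ (he _).hasDerivAt) heπ hρ0 hc hπ),
    compressibility_indicator_eq hρ0 heπ hc hπ]
  refine ⟨rfl, fun hcπ h2π => ?_⟩
  have hd : 0 < k * c (p / ρ) * e (p / ρ) := mul_pos (mul_pos hk hcπ) (hepos _)
  exact ⟨mul_sub_div_pos_iff (by positivity) h2π hd,
    mul_sub_div_neg_iff (by positivity) h2π hd⟩

theorem stmt_15 (c e f : ℝ → ℝ) (k : ℝ) (hk : 0 < k)
    (he : Differentiable ℝ e) (hf : Differentiable ℝ f)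
    (hepos : ∀ x, 0 < e x) (hfpos : ∀ x, 0 < f x)
    (he' : ∀ x, c x ≠ x → x ≠ -1 → deriv e x = e x * x / ((c x - x) * (x + 1)))
    (hf' : ∀ x, c x ≠ x → x ≠ -1 → deriv f x = f x / (c x - x))
    (ρ p : ℝ) (hρ : 0 < ρ) (hc : c (p / ρ) ≠ p / ρ) (hc0 : c (p / ρ) ≠ 0)
    (hπ : p / ρ ≠ -1) :
    (1 / fderiv ℝ (fun q : ℝ × ℝ => k * Real.log (f (q.2 / q.1) / q.1)) (ρ, p) (1, 0)) *
        (ρ / e (p / ρ) -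
          2 * (ρ + p) * fderiv ℝ (fun q : ℝ × ℝ => q.1 / e (q.2 / q.1)) (ρ, p) (1, 0)) =
      ρ ^ 2 * ((2 * (p / ρ) + 1) * c (p / ρ) - p / ρ) / (k * c (p / ρ) * e (p / ρ)) ∧
    (0 < c (p / ρ) → 0 < 2 * (p / ρ) + 1 →
      ((0 < (1 / fderiv ℝ (fun q : ℝ × ℝ => k * Real.log (f (q.2 / q.1) / q.1)) (ρ, p) (1, 0)) *
            (ρ / e (p / ρ) -
              2 * (ρ + p) * fderiv ℝ (fun q : ℝ × ℝ => q.1 / e (q.2 / q.1)) (ρ, p) (1, 0)) ↔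
          p / ρ / (2 * (p / ρ) + 1) < c (p / ρ)) ∧
        ((1 / fderiv ℝ (fun q : ℝ × ℝ => k * Real.log (f (q.2 / q.1) / q.1)) (ρ, p) (1, 0)) *
            (ρ / e (p / ρ) -
              2 * (ρ + p) * fderiv ℝ (fun q : ℝ × ℝ => q.1 / e (q.2 / q.1)) (ρ, p) (1, 0)) < 0 ↔
          c (p / ρ) < p / ρ / (2 * (p / ρ) + 1)))) :=
  stmt_15_general c e f k hk he hf hepos hfpos he' hf' ρ p hρ hc hπ
end

section
/- Let γ > 1 and define c(π) = (γ − 2/3)π² + γπ and π_m = 2/(γ + √(γ² + 4(γ − 2/3))). Then 0 < π_m < 1, and for every π ∈ (0, π_m): π/(2π + 1) < c(π) < 1 and (1 + π)(c(π) − π) c'(π) + 2 c(π)(1 − c(π)) > 0, where c'(π) = 2(γ − 2/3)π + γ. -/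
theorem stmt_16 (γ : ℝ) (hγ : 1 < γ) :
    (0 < 2 / (γ + Real.sqrt (γ ^ 2 + 4 * (γ - 2 / 3))) ∧
        2 / (γ + Real.sqrt (γ ^ 2 + 4 * (γ - 2 / 3))) < 1) ∧
      ∀ π : ℝ, 0 < π → π < 2 / (γ + Real.sqrt (γ ^ 2 + 4 * (γ - 2 / 3))) →
        π / (2 * π + 1) < (γ - 2 / 3) * π ^ 2 + γ * π ∧
        (γ - 2 / 3) * π ^ 2 + γ * π < 1 ∧
        0 < (1 + π) * ((γ - 2 / 3) * π ^ 2 + γ * π - π) * (2 * (γ - 2 / 3) * π + γ) +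
            2 * ((γ - 2 / 3) * π ^ 2 + γ * π) * (1 - ((γ - 2 / 3) * π ^ 2 + γ * π)) := by
  set s := Real.sqrt (γ ^ 2 + 4 * (γ - 2 / 3)) with hsdef
  have hγ0 : (0:ℝ) < γ := by linarith
  have harg : (0:ℝ) ≤ γ ^ 2 + 4 * (γ - 2 / 3) := by nlinarith
  have hs2 : s ^ 2 = γ ^ 2 + 4 * (γ - 2 / 3) := Real.sq_sqrt harg
  have hsγ : γ < s := by
    rw [hsdef, show γ ^ 2 + 4 * (γ - 2 / 3) = γ ^ 2 + (4 * (γ - 2 / 3)) by ring]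
    nlinarith [Real.sq_sqrt (show (0:ℝ) ≤ γ ^ 2 + (4 * (γ - 2 / 3)) by nlinarith),
      Real.sqrt_nonneg (γ ^ 2 + (4 * (γ - 2 / 3)))]
  have hden : (0:ℝ) < γ + s := by linarith
  have hπm1 : 2 / (γ + s) < 1 := by
    rw [div_lt_one hden]; linarith
  refine ⟨⟨by positivity, hπm1⟩, ?_⟩
  intro π hπ hπm
  have hπs : π * (γ + s) < 2 := by
    rw [lt_div_iff₀ hden] at hπm; linarith
  have hc1 : (γ - 2 / 3) * π ^ 2 + γ * π < 1 := by
    have h1 : 0 < 2 - γ * π - s * π := by nlinarith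
    have h2 : 0 < 2 - γ * π + s * π := by nlinarith [mul_pos hπ (lt_trans hγ0 hsγ)]
    nlinarith [mul_pos h1 h2]
  have hcpos : 0 < (γ - 2 / 3) * π ^ 2 + γ * π := by nlinarith
  refine ⟨?_, hc1, ?_⟩
  · rw [div_lt_iff₀ (by linarith)]
    nlinarith
  · have t1 : 0 < (1 + π) * ((γ - 2 / 3) * π ^ 2 + γ * π - π) * (2 * (γ - 2 / 3) * π + γ) := by
      apply mul_pos (mul_pos (by linarith) (by nlinarith)) (by nlinarith)
    have t2 : 0 < 2 * ((γ - 2 / 3) * π ^ 2 + γ * π) * (1 - ((γ - 2 / 3) * π ^ 2 + γ * π)) := by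
      apply mul_pos (by linarith) (by linarith)
    linarith
end

section
/- Let λ ∈ ℝ and define c(π) = (1/16)[3(1 − λ)π² + 2(7 − λ)π + (λ + 1/3)]. Then c(1/3) = 1/3, and there exists ε > 0 such that for every π with |π − 1/3| < ε: π/(2π + 1) < c(π) < 1 and (1 + π)(c(π) − π) c'(π) + 2 c(π)(1 − c(π)) > 0. -/
theorem stmt_17 (l : ℝ) :
    (1 / 16 : ℝ) * (3 * (1 - l) * (1 / 3) ^ 2 + 2 * (7 - l) * (1 / 3) + (l + 1 / 3)) = 1 / 3 ∧
      ∃ ε > (0 : ℝ), ∀ π : ℝ, |π - 1 / 3| < ε →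
        π / (2 * π + 1) <
            (1 / 16) * (3 * (1 - l) * π ^ 2 + 2 * (7 - l) * π + (l + 1 / 3)) ∧
          (1 / 16) * (3 * (1 - l) * π ^ 2 + 2 * (7 - l) * π + (l + 1 / 3)) < 1 ∧
          0 < (1 + π) *
                ((1 / 16) * (3 * (1 - l) * π ^ 2 + 2 * (7 - l) * π + (l + 1 / 3)) - π) *
                ((1 / 16) * (6 * (1 - l) * π + 2 * (7 - l))) +
              2 * ((1 / 16) * (3 * (1 - l) * π ^ 2 + 2 * (7 - l) * π + (l + 1 / 3))) *
                (1 - (1 / 16) * (3 * (1 - l) * π ^ 2 + 2 * (7 - l) * π + (l + 1 / 3))) := by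
  refine ⟨by ring, ?_⟩
  set c : ℝ → ℝ := fun π => (1 / 16) * (3 * (1 - l) * π ^ 2 + 2 * (7 - l) * π + (l + 1 / 3))
    with hc
  have hc3 : c (1/3) = 1/3 := by simp [hc]; ring
  have hcc : Continuous c := by fun_prop
  have h1 : ∀ᶠ π in nhds (1/3 : ℝ), π / (2 * π + 1) < c π := by
    apply ContinuousAt.eventually_lt
    · exact ContinuousAt.div continuousAt_id (by fun_prop) (by norm_num)
    · exact hcc.continuousAt
    · rw [hc3]; norm_num
  have h2 : ∀ᶠ π in nhds (1/3 : ℝ), c π < 1 := by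
    apply ContinuousAt.eventually_lt hcc.continuousAt continuousAt_const
    rw [hc3]; norm_num
  have h3 : ∀ᶠ π in nhds (1/3 : ℝ), (0:ℝ) <
      (1 + π) * (c π - π) * ((1 / 16) * (6 * (1 - l) * π + 2 * (7 - l))) +
        2 * c π * (1 - c π) := by
    apply ContinuousAt.eventually_lt continuousAt_const
    · fun_prop
    · have : (1 + (1/3:ℝ)) * (c (1/3) - 1/3) * ((1 / 16) * (6 * (1 - l) * (1/3) + 2 * (7 - l))) +
          2 * c (1/3) * (1 - c (1/3)) = 4/9 := by
        rw [hc3]; ring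
      rw [this]; norm_num
  have h := (h1.and (h2.and h3))
  rw [Metric.eventually_nhds_iff] at h
  obtain ⟨ε, hε, hball⟩ := h
  exact ⟨ε, hε, fun π hπ => hball (by simpa [Real.dist_eq] using hπ)⟩
end

section
/- Let e₀ > 0, f₀ > 0, and on the interval (0, 1/3) define c(π) = (1/16)(−3π² + 10π + 7/3), e(π) = e₀ (3π + 7)^{7/2} (1 − 3π)^{−1/2} (π + 1)^{−3}, and f(π) = f₀ ((3π + 7)/(1 − 3π))². Then for every π ∈ (0, 1/3): c(π) ≠ π, e'(π) = e(π)·π/((c(π) − π)(π + 1)) and f'(π) = f(π)/(c(π) − π). -/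
/-!
The key identity is the factorization `c(π) - π = (1 - 3π)(3π + 7) / 48`: it gives `c(π) ≠ π` on
`(-7/3, 1/3)`, and it reduces both derivative formulas to rational identities. For `e`, a product of
powers of affine factors, the identity is that the sum of the logarithmic derivatives `r a / (a π + b)`
of the factors equals `π / ((c(π) - π)(π + 1))`.
-/

theorem HasDerivAt.rpow_const_of_pos {g : ℝ → ℝ} {g' x : ℝ} (r : ℝ) (hg : HasDerivAt g g' x)
    (hx : 0 < g x) : HasDerivAt (fun y => g y ^ r) (g x ^ r * (r * g' / g x)) x := by
  refine (hg.rpow_const (Or.inl hx.ne')).congr_deriv ?_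
  rw [Real.rpow_sub_one hx.ne']
  ring

theorem HasDerivAt.mul_of_logDeriv {f g : ℝ → ℝ} {u v x : ℝ} (hf : HasDerivAt f (f x * u) x)
    (hg : HasDerivAt g (g x * v) x) :
    HasDerivAt (fun y => f y * g y) (f x * g x * (u + v)) x :=
  (hf.mul hg).congr_deriv (by ring)

section Indicatrix

variable {π : ℝ}

theorem indicatrix_sub_self (π : ℝ) :
    (1 / 16 : ℝ) * (-3 * π ^ 2 + 10 * π + 7 / 3) - π = (1 - 3 * π) * (3 * π + 7) / 48 := by
  ring

theorem indicatrix_sub_self_pos (h₀ : -7 / 3 < π) (h₁ : π < 1 / 3) :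
    0 < (1 / 16 : ℝ) * (-3 * π ^ 2 + 10 * π + 7 / 3) - π := by
  rw [indicatrix_sub_self]
  have : 0 < (1 - 3 * π) * (3 * π + 7) := mul_pos (by linarith) (by linarith)
  positivity

theorem logDeriv_factors_sum_eq (h₀ : -1 < π) (h₁ : π < 1 / 3) :
    7 / 2 * 3 / (3 * π + 7) + (-1 / 2) * (-3) / (1 - 3 * π) + (-3) * 1 / (π + 1) =
      π / (((1 / 16) * (-3 * π ^ 2 + 10 * π + 7 / 3) - π) * (π + 1)) := by
  have hA : 3 * π + 7 ≠ 0 := by linarith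
  have hB : 1 - 3 * π ≠ 0 := by linarith
  have hC : π + 1 ≠ 0 := by linarith
  rw [indicatrix_sub_self]
  field_simp
  ring

end Indicatrix

theorem stmt_19_general (e₀ f₀ : ℝ) :
    ∀ π : ℝ, 0 < π → π < 1 / 3 →
      (1 / 16 : ℝ) * (-3 * π ^ 2 + 10 * π + 7 / 3) ≠ π ∧
      HasDerivAt
        (fun x : ℝ =>
          e₀ * (3 * x + 7) ^ ((7 : ℝ) / 2) * (1 - 3 * x) ^ (-(1 : ℝ) / 2) *
            (x + 1) ^ (-(3 : ℝ)))
        ((e₀ * (3 * π + 7) ^ ((7 : ℝ) / 2) * (1 - 3 * π) ^ (-(1 : ℝ) / 2) *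
            (π + 1) ^ (-(3 : ℝ))) * π /
          (((1 / 16) * (-3 * π ^ 2 + 10 * π + 7 / 3) - π) * (π + 1))) π ∧
      HasDerivAt (fun x : ℝ => f₀ * ((3 * x + 7) / (1 - 3 * x)) ^ 2)
        ((f₀ * ((3 * π + 7) / (1 - 3 * π)) ^ 2) /
          ((1 / 16) * (-3 * π ^ 2 + 10 * π + 7 / 3) - π)) π := by
  intro π hπ hπ'
  have hA : 0 < 3 * π + 7 := by linarith
  have hB : 0 < 1 - 3 * π := by linarith
  have hC : 0 < π + 1 := by linarith
  have dA : HasDerivAt (fun x : ℝ => 3 * x + 7) 3 π := by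
    simpa using ((hasDerivAt_id π).const_mul 3).add_const 7
  have dB : HasDerivAt (fun x : ℝ => 1 - 3 * x) (-3) π := by
    simpa using ((hasDerivAt_id π).const_mul 3).const_sub 1
  have dC : HasDerivAt (fun x : ℝ => x + 1) 1 π := (hasDerivAt_id π).add_const 1
  refine ⟨(indicatrix_sub_self_pos (by linarith) hπ').ne' ∘ sub_eq_zero.mpr, ?_, ?_⟩
  · have de := ((((dA.rpow_const_of_pos ((7 : ℝ) / 2) hA).const_mul e₀).congr_deriv
        (mul_assoc _ _ _).symm).mul_of_logDeriv
        (dB.rpow_const_of_pos (-(1 : ℝ) / 2) hB)).mul_of_logDeriv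
        (dC.rpow_const_of_pos (-(3 : ℝ)) hC)
    rw [logDeriv_factors_sum_eq (by linarith) hπ'] at de
    exact de.congr_deriv (mul_div_assoc _ _ _).symm
  · refine (((dA.fun_div dB hB.ne').fun_pow 2).const_mul f₀).congr_deriv ?_
    rw [indicatrix_sub_self, Nat.cast_ofNat, Nat.add_one_sub_one, pow_one]
    field_simp [hA.ne', hB.ne']
    ring

theorem stmt_19 (e₀ f₀ : ℝ) (he₀ : 0 < e₀) (hf₀ : 0 < f₀) :
    ∀ π : ℝ, 0 < π → π < 1 / 3 →
      (1 / 16 : ℝ) * (-3 * π ^ 2 + 10 * π + 7 / 3) ≠ π ∧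
      HasDerivAt
        (fun x : ℝ =>
          e₀ * (3 * x + 7) ^ ((7 : ℝ) / 2) * (1 - 3 * x) ^ (-(1 : ℝ) / 2) *
            (x + 1) ^ (-(3 : ℝ)))
        ((e₀ * (3 * π + 7) ^ ((7 : ℝ) / 2) * (1 - 3 * π) ^ (-(1 : ℝ) / 2) *
            (π + 1) ^ (-(3 : ℝ))) * π /
          (((1 / 16) * (-3 * π ^ 2 + 10 * π + 7 / 3) - π) * (π + 1))) π ∧
      HasDerivAt (fun x : ℝ => f₀ * ((3 * x + 7) / (1 - 3 * x)) ^ 2)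
        ((f₀ * ((3 * π + 7) / (1 - 3 * π)) ^ 2) /
          ((1 / 16) * (-3 * π ^ 2 + 10 * π + 7 / 3) - π)) π :=
  stmt_19_general e₀ f₀
end
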